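/- For every positive integer k and every n ≥ 2, n ≤ (χ_L(S_n(k)))^k; equivalently, χ_L(S_n(k)) ≥ n^{1/k}. -/

import Mathlib

open SimpleGraph

/-- Distance from a vertex to a set of vertices, `d(u,S) = min {d(u,v) : v ∈ S}`. -/
noncomputable def distToSet {V : Type*} (G : SimpleGraph V) (u : V) (S : Set V) : ℕ :=
  sInf (G.dist u '' S)

/-- `c` is a locating coloring of `G` with `k` colors: a proper coloring such that any two
distinct vertices are resolved by some color class. -/
def IsLocatingColoring {V : Type*} (G : SimpleGraph V) {k : ℕ} (c : V → Fin k) : Prop :=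
  (∀ u v : V, G.Adj u v → c u ≠ c v) ∧
  ∀ u v : V, u ≠ v →
    ∃ i : Fin k, distToSet G u (c ⁻¹' {i}) ≠ distToSet G v (c ⁻¹' {i})

/-- The locating chromatic number `χ_L(G)`: the least `k` admitting a locating `k`-coloring. -/
noncomputable def locatingChromaticNumber {V : Type*} (G : SimpleGraph V) : ℕ :=
  sInf {k : ℕ | ∃ c : V → Fin k, IsLocatingColoring G c}

/-- The vertex set of the palm `S_n(a_1, …, a_n)`: a hub `none` and, for each leg
`i : Fin n` (representing leg `i+1`), vertices `j : Fin (a (i+1))`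
(vertex `some ⟨i, j⟩` represents `a_{i+1, j+1}`). -/
def PalmVert (n : ℕ) (a : ℕ → ℕ) : Type :=
  Option ((i : Fin n) × Fin (a ((i : ℕ) + 1)))

/-- The palm `S_n(a_1, …, a_n)`: the star `K_{1,n}` whose `i`-th edge has been subdivided
`a_i - 1` times; the hub is joined to the first vertex of each leg, and consecutive
vertices along a leg are adjacent. -/
def Palm (n : ℕ) (a : ℕ → ℕ) : SimpleGraph (PalmVert n a) :=
  SimpleGraph.fromRel fun u v =>
    match u, v with
    | none, some ⟨_, j⟩ => (j : ℕ) = 0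
    | some ⟨i, j⟩, some ⟨i', j'⟩ => (i : ℕ) = (i' : ℕ) ∧ (j' : ℕ) = (j : ℕ) + 1
    | _, _ => False

/-!
Permuting the legs of the regular palm `S_n(k)` is an automorphism. An automorphism that
preserves a locating coloring `c` fixes every vertex, since it preserves the distance of each
vertex to each color class. So if two legs carried the same word of colors, swapping them would
move the first vertex of a leg while preserving `c`; hence the `n` legs carry pairwise distinct
words of length `k` over `χ_L(S_n(k))` colors, and `n ≤ χ_L(S_n(k))^k`.
-/

namespace SimpleGraph

variable {V V' : Type*} {G : SimpleGraph V} {G' : SimpleGraph V'}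

lemma Reachable.dist_map_le (f : G →g G') {u v : V} (h : G.Reachable u v) :
    G'.dist (f u) (f v) ≤ G.dist u v := by
  obtain ⟨p, hp⟩ := h.exists_walk_length_eq_dist
  calc G'.dist (f u) (f v) ≤ (p.map f).length := dist_le _
    _ = G.dist u v := by rw [Walk.length_map, hp]

lemma Iso.dist_map (φ : G ≃g G') (u v : V) : G'.dist (φ u) (φ v) = G.dist u v := by
  by_cases h : G.Reachable u v
  · refine le_antisymm (h.dist_map_le φ.toHom) ?_
    simpa using ((Iso.reachable_iff (φ := φ)).2 h).dist_map_le φ.symm.toHom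
  · rw [dist_eq_zero_of_not_reachable h,
      dist_eq_zero_of_not_reachable (mt Iso.reachable_iff.1 h)]

end SimpleGraph

section LocatingColoring

variable {V V' : Type*} {G : SimpleGraph V} {G' : SimpleGraph V'}

lemma SimpleGraph.Iso.distToSet_image (φ : G ≃g G') (u : V) (S : Set V) :
    distToSet G' (φ u) (φ '' S) = distToSet G u S := by
  simp only [distToSet, Set.image_image, φ.dist_map]

lemma SimpleGraph.Connected.exists_isLocatingColoring [Finite V] (hG : G.Connected) :
    ∃ c : V → Fin (Nat.card V), IsLocatingColoring G c := by
  refine ⟨Finite.equivFin V, fun u v huv he => huv.ne ((Finite.equivFin V).injective he),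
    fun u v huv => ⟨Finite.equivFin V u, ?_⟩⟩
  have hu : Finite.equivFin V ⁻¹' {Finite.equivFin V u} = {u} := by
    ext; simp
  simp only [hu, distToSet, Set.image_singleton, csInf_singleton, dist_self]
  exact (hG.pos_dist_of_ne (Ne.symm huv)).ne

lemma SimpleGraph.Connected.exists_isLocatingColoring_locatingChromaticNumber [Finite V]
    (hG : G.Connected) :
    ∃ c : V → Fin (locatingChromaticNumber G), IsLocatingColoring G c :=
  Nat.sInf_mem (s := {k | ∃ c : V → Fin k, IsLocatingColoring G c})
    ⟨_, hG.exists_isLocatingColoring⟩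

lemma IsLocatingColoring.apply_eq_self_of_iso {m : ℕ} {c : V → Fin m}
    (hc : IsLocatingColoring G c) (φ : G ≃g G) (hφ : ∀ v, c (φ v) = c v) (v : V) :
    φ v = v := by
  by_contra hne
  obtain ⟨i, hi⟩ := hc.2 _ _ hne
  have hclass : φ '' (c ⁻¹' {i}) = c ⁻¹' {i} := by
    ext x
    obtain ⟨y, rfl⟩ := φ.surjective x
    simp [φ.injective.mem_set_image, hφ]
  have hdist := φ.distToSet_image v (c ⁻¹' {i})
  rw [hclass] at hdist
  exact hi hdist

end LocatingColoring

namespace Palm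

instance (n : ℕ) (a : ℕ → ℕ) : Finite (PalmVert n a) :=
  inferInstanceAs (Finite (Option _))

variable {n : ℕ} {a : ℕ → ℕ}

lemma adj_none_some (i : Fin n) (j : Fin (a (i + 1))) (hj : (j : ℕ) = 0) :
    (Palm n a).Adj none (some ⟨i, j⟩) := by
  simp [Palm, PalmVert, fromRel_adj, hj]

lemma adj_some_some (i : Fin n) (j j' : Fin (a (i + 1))) (hj : (j' : ℕ) = j + 1) :
    (Palm n a).Adj (some ⟨i, j⟩) (some ⟨i, j'⟩) := by
  simp [Palm, PalmVert, fromRel_adj, hj, Fin.ext_iff]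

lemma reachable_none (v : PalmVert n a) : (Palm n a).Reachable none v := by
  rcases v with _ | ⟨i, j, hj⟩
  · rfl
  induction j with
  | zero => exact (adj_none_some i ⟨0, hj⟩ rfl).reachable
  | succ j ih =>
    exact (ih (by omega)).trans (adj_some_some i ⟨j, _⟩ ⟨j + 1, hj⟩ rfl).reachable

lemma connected (n : ℕ) (a : ℕ → ℕ) : (Palm n a).Connected :=
  (connected_iff_exists_forall_reachable _).2 ⟨none, reachable_none⟩

variable {k : ℕ}

def permLegs (π : Equiv.Perm (Fin n)) : Palm n (fun _ => k) ≃g Palm n (fun _ => k) where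
  toEquiv := Equiv.optionCongr (Equiv.sigmaCongrLeft (β := fun _ => Fin k) π)
  map_rel_iff' := by
    rintro (_ | ⟨i, j⟩) (_ | ⟨i', j'⟩)
    · exact Iff.rfl
    · show (Palm n fun _ => k).Adj none (some ⟨π i', j'⟩) ↔ _
      simp [Palm, PalmVert, fromRel_adj]
    · show (Palm n fun _ => k).Adj (some ⟨π i, j⟩) none ↔ _
      simp [Palm, PalmVert, fromRel_adj]
    · show (Palm n fun _ => k).Adj (some ⟨π i, j⟩) (some ⟨π i', j'⟩) ↔ _
      simp [Palm, PalmVert, fromRel_adj, Fin.val_inj]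

@[simp]
lemma permLegs_some (π : Equiv.Perm (Fin n)) (i : Fin n) (j : Fin k) :
    permLegs π (some ⟨i, j⟩) = some ⟨π i, j⟩ :=
  rfl

end Palm

lemma IsLocatingColoring.injective_palm_legColors {n k m : ℕ} (hk : 0 < k)
    {c : PalmVert n (fun _ => k) → Fin m} (hc : IsLocatingColoring (Palm n fun _ => k) c) :
    Function.Injective fun (i : Fin n) (j : Fin k) => c (some ⟨i, j⟩) := by
  intro i i' hii'
  have hswap : ∀ v, c (Palm.permLegs (Equiv.swap i i') v) = c v := by
    rintro (_ | ⟨l, j⟩)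
    · rfl
    · exact congrFun (Equiv.apply_swap_eq_self (v := fun i j => c (some ⟨i, j⟩)) hii' l) j
  have hfix := hc.apply_eq_self_of_iso _ hswap (some ⟨i, ⟨0, hk⟩⟩)
  rw [Palm.permLegs_some, Equiv.swap_apply_left] at hfix
  exact (Sigma.mk.inj_iff.1 (Option.some.inj hfix)).1.symm

lemma IsLocatingColoring.card_le_pow_palm {n k m : ℕ} (hk : 0 < k)
    {c : PalmVert n (fun _ => k) → Fin m} (hc : IsLocatingColoring (Palm n fun _ => k) c) :
    n ≤ m ^ k := by
  simpa using Fintype.card_le_of_injective _ (hc.injective_palm_legColors hk)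

theorem locatingChromaticNumber_regularPalm_lower_general (k : ℕ) (hk : 1 ≤ k)
    (n : ℕ) :
    n ≤ (locatingChromaticNumber (Palm n (fun _ => k))) ^ k ∧
      (n : ℝ) ^ ((1 : ℝ) / k) ≤ (locatingChromaticNumber (Palm n (fun _ => k)) : ℝ) := by
  obtain ⟨c, hc⟩ :=
    (Palm.connected n fun _ => k).exists_isLocatingColoring_locatingChromaticNumber
  have hle := hc.card_le_pow_palm hk
  refine ⟨hle, ?_⟩
  rw [one_div, Real.rpow_inv_le_iff_of_pos (by positivity) (by positivity) (by positivity),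
    Real.rpow_natCast]
  exact_mod_cast hle

/-- For every positive integer `k` and every `n ≥ 2`,
`n ≤ (χ_L(S_n(k)))^k`; equivalently, `χ_L(S_n(k)) ≥ n^{1/k}`. -/
theorem locatingChromaticNumber_regularPalm_lower (k : ℕ) (hk : 1 ≤ k)
    (n : ℕ) (hn : 2 ≤ n) :
    n ≤ (locatingChromaticNumber (Palm n (fun _ => k))) ^ k ∧
      (n : ℝ) ^ ((1 : ℝ) / k) ≤ (locatingChromaticNumber (Palm n (fun _ => k)) : ℝ) :=
  locatingChromaticNumber_regularPalm_lower_general k hk n
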